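/- arXiv:2211.07163 — 4 statements merged into one kernel-verified Lean document; each statement's English description precedes it below -/
import Mathlib

section
/- If L is a dcpo which is a sup semilattice, then the strong way-below relation coincides with the way-below relation: x ≪_s y if and only if x ≪ y. -/
open Set

variable {L : Type*}

/-- A directed subset: nonempty and directed under `≤`. -/
def DirSet [Preorder L] (D : Set L) : Prop := D.Nonempty ∧ DirectedOn (· ≤ ·) D

/-- Strongly Scott open sets (the family `σ^s(L)`). -/
def StronglyScottOpen [Preorder L] [SupSet L] (U : Set L) : Prop :=
  IsUpperSet U ∧ ∀ D : Set L, DirSet D → ∀ x : L,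
    Ici (sSup D) ∩ Ici x ⊆ U → ∃ d ∈ D, Ici d ∩ Ici x ⊆ U

/-- The strong Scott topology `σ_s(L)`, generated by the strongly Scott open sets. -/
def strongScott (L : Type*) [Preorder L] [SupSet L] : TopologicalSpace L :=
  TopologicalSpace.generateFrom {U | StronglyScottOpen U}

/-- Scott open sets. -/
def ScottOpen [Preorder L] [SupSet L] (U : Set L) : Prop :=
  IsUpperSet U ∧ ∀ D : Set L, DirSet D → sSup D ∈ U → (D ∩ U).Nonempty

/-- The Scott topology `σ(L)`. -/
def scottTop (L : Type*) [Preorder L] [SupSet L] : TopologicalSpace L :=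
  TopologicalSpace.generateFrom {U | ScottOpen U}

/-- The upper topology `υ(L)`. -/
def upperTop (L : Type*) [Preorder L] : TopologicalSpace L :=
  TopologicalSpace.generateFrom {U | ∃ x : L, U = (Iic x)ᶜ}

/-- The lower topology `ω(L)`. -/
def lowerTop (L : Type*) [Preorder L] : TopologicalSpace L :=
  TopologicalSpace.generateFrom {U | ∃ x : L, U = (Ici x)ᶜ}

/-- The strong way-below relation `x ≪_s y`. -/
def SWayBelow [Preorder L] (x y : L) : Prop :=
  ∀ D : Set L, DirSet D → ∀ a : L,
    (⋂ d ∈ D, Ici d) ∩ Ici a ⊆ Ici y → ∃ d ∈ D, Ici d ∩ Ici a ⊆ Ici x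

/-- The way-below relation `x ≪ y`. -/
def WayBelow [Preorder L] [SupSet L] (x y : L) : Prop :=
  ∀ D : Set L, DirSet D → y ≤ sSup D → ∃ d ∈ D, x ≤ d

/-- `X` with topology `t` is a C-space (w.r.t. the order of `L`). -/
def IsCSpace [Preorder L] (t : TopologicalSpace L) : Prop :=
  ∀ U : Set L, @IsOpen _ (t) U → ∀ x ∈ U, ∃ y ∈ U,
    x ∈ @interior L t (Ici y) ∧ Ici y ⊆ U

/-- `L` is a strongly continuous domain. -/
def StronglyContinuousDomain (L : Type*) [Preorder L] [SupSet L] : Prop :=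
  IsCSpace (strongScott L)

/-- `L` is a continuous domain. -/
def ContinuousDomain (L : Type*) [Preorder L] [SupSet L] : Prop :=
  ∀ x : L, DirSet {y | WayBelow y x} ∧ IsLUB {y | WayBelow y x} x

/-- `L` is a hypercontinuous domain. -/
def HypercontinuousDomain (L : Type*) [Preorder L] : Prop :=
  ∀ x : L, DirSet {y | x ∈ @interior L (upperTop L) (Ici y)} ∧
    IsLUB {y | x ∈ @interior L (upperTop L) (Ici y)} x

/-- The strong Lawson topology `λ_s(L)`: common refinement of `σ_s(L)` and `ω(L)`. -/
def strongLawson (L : Type*) [Preorder L] [SupSet L] : TopologicalSpace L :=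
  TopologicalSpace.generateFrom
    {U | @IsOpen _ (strongScott L) U ∨ @IsOpen _ (lowerTop L) U}

/-!
In a dcpo `⋂_{d ∈ D} ↑d = ↑(⋁ D)` for directed `D`, which makes `≪_s` imply `≪`. Conversely,
given `D` and `a`, the set `D ∨ a = {d ∨ a | d ∈ D}` is directed and its supremum lies in
`⋂_{d ∈ D} ↑d ∩ ↑a ⊆ ↑y`; so `x ≪ y` gives `d ∈ D` with `x ≤ d ∨ a`, i.e. `↑d ∩ ↑a ⊆ ↑x`.
-/

theorem DirectedOn.iInter_Ici_eq_Ici_sSup [CompletePartialOrder L] {D : Set L}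
    (hD : DirectedOn (· ≤ ·) D) : ⋂ d ∈ D, Ici d = Ici (sSup D) := by
  ext z
  simp only [mem_iInter, mem_Ici]
  exact ⟨hD.sSup_le, fun hz d hd => (hD.le_sSup hd).trans hz⟩

theorem SWayBelow.wayBelow [CompletePartialOrder L] {x y : L} (h : SWayBelow x y) :
    WayBelow x y := by
  intro D hD hy
  obtain ⟨a, ha⟩ := hD.1
  have hsub : (⋂ d ∈ D, Ici d) ∩ Ici a ⊆ Ici y := by
    rw [hD.2.iInter_Ici_eq_Ici_sSup]
    exact fun z hz => hy.trans hz.1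
  obtain ⟨d, hd, hdx⟩ := h D hD a hsub
  obtain ⟨e, he, hde, hae⟩ := hD.2 d hd a ha
  exact ⟨e, he, hdx ⟨hde, hae⟩⟩

theorem upperBounds_pair [Preorder L] (a b : L) : upperBounds {a, b} = Ici a ∩ Ici b := by
  rw [upperBounds_insert, upperBounds_singleton]

theorem IsLUB.le_of_pair_le [Preorder L] {d e a c c' : L} (hc : IsLUB {d, a} c)
    (hc' : IsLUB {e, a} c') (hde : d ≤ e) : c ≤ c' :=
  hc.2 <| (upperBounds_pair d a).symm ▸
    ⟨hde.trans (hc'.1 (mem_insert e _)), hc'.1 (mem_insert_of_mem e rfl)⟩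

/-- `{d ⊔ a | d ∈ D}`, with joins given by `IsLUB` (in a preorder they need not be unique). -/
def joinsWith [Preorder L] (D : Set L) (a : L) : Set L := {c | ∃ d ∈ D, IsLUB {d, a} c}

theorem dirSet_joinsWith [Preorder L] (hsup : ∀ a b : L, ∃ c : L, IsLUB {a, b} c)
    {D : Set L} (hD : DirSet D) (a : L) : DirSet (joinsWith D a) := by
  obtain ⟨d, hd⟩ := hD.1
  obtain ⟨c, hc⟩ := hsup d a
  refine ⟨⟨c, d, hd, hc⟩, ?_⟩
  rintro c₁ ⟨d₁, hd₁, hc₁⟩ c₂ ⟨d₂, hd₂, hc₂⟩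
  obtain ⟨d₃, hd₃, h₁₃, h₂₃⟩ := hD.2 d₁ hd₁ d₂ hd₂
  obtain ⟨c₃, hc₃⟩ := hsup d₃ a
  exact ⟨c₃, ⟨d₃, hd₃, hc₃⟩, hc₁.le_of_pair_le hc₃ h₁₃, hc₂.le_of_pair_le hc₃ h₂₃⟩

theorem sSup_joinsWith_mem [CompletePartialOrder L]
    (hsup : ∀ a b : L, ∃ c : L, IsLUB {a, b} c) {D : Set L} (hD : DirSet D) (a : L) :
    sSup (joinsWith D a) ∈ (⋂ d ∈ D, Ici d) ∩ Ici a := by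
  have hdir := (dirSet_joinsWith hsup hD a).2
  have hle : ∀ d ∈ D, d ≤ sSup (joinsWith D a) ∧ a ≤ sSup (joinsWith D a) := fun d hd => by
    obtain ⟨c, hc⟩ := hsup d a
    have hcD := hdir.le_sSup ⟨d, hd, hc⟩
    exact ⟨(hc.1 (mem_insert d _)).trans hcD, (hc.1 (mem_insert_of_mem d rfl)).trans hcD⟩
  obtain ⟨d₀, hd₀⟩ := hD.1
  exact ⟨mem_iInter₂.2 fun d hd => (hle d hd).1, (hle d₀ hd₀).2⟩

theorem WayBelow.sWayBelow [CompletePartialOrder L]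
    (hsup : ∀ a b : L, ∃ c : L, IsLUB {a, b} c) {x y : L} (h : WayBelow x y) :
    SWayBelow x y := by
  intro D hD a hsub
  obtain ⟨c, ⟨d, hd, hc⟩, hxc⟩ :=
    h (joinsWith D a) (dirSet_joinsWith hsup hD a) (hsub (sSup_joinsWith_mem hsup hD a))
  exact ⟨d, hd, fun z hz => hxc.trans (hc.2 ((upperBounds_pair d a).symm ▸ hz))⟩

theorem sWayBelow_iff_wayBelow_of_supSemilattice [CompletePartialOrder L]
    (hsup : ∀ a b : L, ∃ c : L, IsLUB {a, b} c) (x y : L) :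
    SWayBelow x y ↔ WayBelow x y :=
  ⟨SWayBelow.wayBelow, WayBelow.sWayBelow hsup⟩
end

section
/- Let L be a dcpo and x ∈ L. If there exists a directed set D ⊆ ⇓_s x (the set of elements strongly way-below x) with sup D = x, then ⇓_s x is directed and sup ⇓_s x = x. -/
open Set

variable {L : Type*}

/-!
Applying the definition of `y ≪_s x` to `D` itself, with `a ∈ D`, puts every `y ≪_s x` below some
member of `D`. So `D` is cofinal in `⇓_s x ⊇ D`, and `⇓_s x` inherits directedness and the
supremum `x` from `D`.
-/

section Cofinal

variable [Preorder L] {s t : Set L}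

theorem DirectedOn.of_superset_of_isCofinalFor (hs : DirectedOn (· ≤ ·) s) (hst : s ⊆ t)
    (hc : IsCofinalFor t s) : DirectedOn (· ≤ ·) t := by
  intro x hx y hy
  obtain ⟨a, ha, hxa⟩ := hc hx
  obtain ⟨b, hb, hyb⟩ := hc hy
  obtain ⟨c, hcs, hac, hbc⟩ := hs a ha b hb
  exact ⟨c, hst hcs, hxa.trans hac, hyb.trans hbc⟩

theorem DirSet.of_superset_of_isCofinalFor (hs : DirSet s) (hst : s ⊆ t)
    (hc : IsCofinalFor t s) : DirSet t :=
  ⟨hs.1.mono hst, hs.2.of_superset_of_isCofinalFor hst hc⟩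

theorem IsLUB.of_superset_of_isCofinalFor {x : L} (hs : IsLUB s x) (hst : s ⊆ t)
    (hc : IsCofinalFor t s) : IsLUB t x :=
  (isLUB_congr ((upperBounds_mono_set hst).antisymm (upperBounds_mono_of_isCofinalFor hc))).2 hs

end Cofinal

theorem SWayBelow.exists_le_of_isLUB [Preorder L] {x y : L} (h : SWayBelow y x) {D : Set L}
    (hD : DirSet D) (hx : IsLUB D x) : ∃ d ∈ D, y ≤ d := by
  obtain ⟨a, ha⟩ := hD.1
  have hsub : (⋂ d ∈ D, Ici d) ∩ Ici a ⊆ Ici x := fun z hz ↦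
    hx.2 fun d hd ↦ mem_iInter₂.1 hz.1 d hd
  obtain ⟨d₁, hd₁, hy⟩ := h D hD a hsub
  obtain ⟨d, hd, hd₁d, had⟩ := hD.2 d₁ hd₁ a ha
  exact ⟨d, hd, hy ⟨hd₁d, had⟩⟩

theorem sWayBelow_directed_of_exists [CompletePartialOrder L] (x : L)
    (D : Set L) (hD : DirSet D) (hsub : D ⊆ {y | SWayBelow y x})
    (hlub : IsLUB D x) :
    DirSet {y | SWayBelow y x} ∧ IsLUB {y | SWayBelow y x} x := by
  have hcof : IsCofinalFor {y | SWayBelow y x} D := fun _ hy ↦ hy.exists_le_of_isLUB hD hlub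
  exact ⟨hD.of_superset_of_isCofinalFor hsub hcof, hlub.of_superset_of_isCofinalFor hsub hcof⟩
end

section
/- Let L be a strongly continuous domain. If x ≪_s z and z ≤ ⋁D for a directed set D in L, then x ≪_s d for some d ∈ D. -/
open Set

variable {L : Type*}

/-!
In a C-space `z` lies in the interior of `↑x` as soon as `x ≪_s z`: the points `y` with
`z ∈ int ↑y` form a directed set whose upper bounds lie above `z`, and `x ≪_s z` applied to it
puts one of them above `x`. Hence some strongly Scott open `V` satisfies `z ∈ V ⊆ ↑x`. Being an
upper set, `V` contains `⋁D`, so it contains some `d ∈ D`, and every point of `V` is strongly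
way above `x`.
-/

open TopologicalSpace Topology

section StronglyScottOpen

variable [Preorder L] [SupSet L] {U V : Set L}

theorem StronglyScottOpen.inter (hU : StronglyScottOpen U) (hV : StronglyScottOpen V) :
    StronglyScottOpen (U ∩ V) := by
  refine ⟨hU.1.inter hV.1, fun D hD a hsub => ?_⟩
  obtain ⟨d₁, hd₁, h₁⟩ := hU.2 D hD a (hsub.trans inter_subset_left)
  obtain ⟨d₂, hd₂, h₂⟩ := hV.2 D hD a (hsub.trans inter_subset_right)
  obtain ⟨d, hd, hd₁d, hd₂d⟩ := hD.2 d₁ hd₁ d₂ hd₂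
  exact ⟨d, hd, fun w hw =>
    ⟨h₁ ⟨hd₁d.trans hw.1, hw.2⟩, h₂ ⟨hd₂d.trans hw.1, hw.2⟩⟩⟩

theorem finiteInter_stronglyScottOpen : FiniteInter {U : Set L | StronglyScottOpen U} where
  univ_mem := ⟨isUpperSet_univ, fun _ hD _ _ =>
    let ⟨d, hd⟩ := hD.1
    ⟨d, hd, subset_univ _⟩⟩
  inter_mem _ hU _ hV := hU.inter hV

theorem isTopologicalBasis_stronglyScottOpen :
    @IsTopologicalBasis L (strongScott L) {U | StronglyScottOpen U} :=
  @isTopologicalBasis_of_subbasis_of_finiteInter L (strongScott L) _ rfl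
    finiteInter_stronglyScottOpen

theorem StronglyScottOpen.exists_mem_of_sSup_mem (hU : StronglyScottOpen U) {D : Set L}
    (hD : DirSet D) (hDU : sSup D ∈ U) : ∃ d ∈ D, d ∈ U := by
  obtain ⟨d₀, hd₀⟩ := hD.1
  obtain ⟨d₁, hd₁, hsub⟩ := hU.2 D hD d₀ fun w hw => hU.1 hw.1 hDU
  obtain ⟨d, hd, hd₁d, hd₀d⟩ := hD.2 d₁ hd₁ d₀ hd₀
  exact ⟨d, hd, hsub ⟨hd₁d, hd₀d⟩⟩

end StronglyScottOpen

section CompletePartialOrder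

variable [CompletePartialOrder L] {V : Set L} {x z : L}

theorem stronglyScottOpen_compl_Iic (w : L) : StronglyScottOpen (Iic w)ᶜ := by
  refine ⟨(isLowerSet_Iic w).compl, fun D hD a hsub => ?_⟩
  by_contra! hD_le
  have hbelow : ∀ d ∈ D, d ≤ w ∧ a ≤ w := fun d hd => by
    obtain ⟨v, ⟨hdv, hav⟩, hvw⟩ := not_subset.1 (hD_le d hd)
    exact ⟨hdv.trans (not_not.1 hvw), hav.trans (not_not.1 hvw)⟩
  obtain ⟨d₀, hd₀⟩ := hD.1
  exact hsub ⟨hD.2.sSup_le fun d hd => (hbelow d hd).1, (hbelow d₀ hd₀).2⟩ le_rfl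

theorem isOpen_compl_Iic_strongScott (w : L) : IsOpen[strongScott L] (Iic w)ᶜ :=
  GenerateOpen.basic _ (stronglyScottOpen_compl_Iic w)

theorem StronglyScottOpen.sWayBelow (hV : StronglyScottOpen V) (hzV : z ∈ V)
    (hVx : V ⊆ Ici x) : SWayBelow x z := by
  intro D hD a hsub
  have hDV : Ici (sSup D) ∩ Ici a ⊆ V := fun w hw =>
    hV.1 (hsub ⟨mem_iInter₂.2 fun _ hd =>
      (hD.2.le_sSup hd).trans hw.1, hw.2⟩) hzV
  obtain ⟨d, hd, hdV⟩ := hV.2 D hD a hDV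
  exact ⟨d, hd, hdV.trans hVx⟩

end CompletePartialOrder

section CSpace

variable [Preorder L] [t : TopologicalSpace L] {x z : L}

theorem IsCSpace.dirSet_interior_Ici (hL : IsCSpace t) (z : L) :
    DirSet {y | z ∈ interior (Ici y)} := by
  refine ⟨?_, fun y₁ hy₁ y₂ hy₂ => ?_⟩
  · obtain ⟨y, -, hy, -⟩ := hL univ isOpen_univ z (mem_univ z)
    exact ⟨y, hy⟩
  · obtain ⟨y, ⟨hy₁y, hy₂y⟩, hy, -⟩ :=
      hL _ (isOpen_interior.inter isOpen_interior) z ⟨hy₁, hy₂⟩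
    exact ⟨y, hy, interior_subset hy₁y, interior_subset hy₂y⟩

theorem IsCSpace.le_of_forall_mem_interior_Ici_le (hL : IsCSpace t) {w : L}
    (hw : IsOpen (Iic w)ᶜ) (h : ∀ y, z ∈ interior (Ici y) → y ≤ w) : z ≤ w := by
  by_contra hzw
  obtain ⟨y, hyw, hy, -⟩ := hL _ hw z hzw
  exact hyw (h y hy)

theorem IsCSpace.mem_interior_Ici_of_sWayBelow (hL : IsCSpace t)
    (hIic : ∀ w : L, IsOpen (Iic w)ᶜ) (hxz : SWayBelow x z) : z ∈ interior (Ici x) := by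
  set B := {y | z ∈ interior (Ici y)}
  have hB := hL.dirSet_interior_Ici z
  obtain ⟨b, hb⟩ := hB.1
  have hBz : (⋂ y ∈ B, Ici y) ∩ Ici b ⊆ Ici z := fun w hw =>
    hL.le_of_forall_mem_interior_Ici_le (hIic w) fun y hy => mem_iInter₂.1 hw.1 y hy
  obtain ⟨y₀, hy₀, hy₀x⟩ := hxz B hB b hBz
  obtain ⟨y, hy, hy₀y, hby⟩ := hB.2 y₀ hy₀ b hb
  exact interior_mono (Ici_subset_Ici.2 (hy₀x ⟨hy₀y, hby⟩)) hy

end CSpace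

theorem sWayBelow_of_le_dirSup [CompletePartialOrder L]
    (hL : StronglyContinuousDomain L) {x z : L} {D : Set L}
    (hxz : SWayBelow x z) (hD : DirSet D) (hz : z ≤ sSup D) :
    ∃ d ∈ D, SWayBelow x d := by
  let _ := strongScott L
  have hzx : z ∈ interior (Ici x) :=
    IsCSpace.mem_interior_Ici_of_sWayBelow hL isOpen_compl_Iic_strongScott hxz
  obtain ⟨V, hV, hzV, hVx⟩ :=
    isTopologicalBasis_stronglyScottOpen.exists_subset_of_mem_open hzx isOpen_interior
  obtain ⟨d, hd, hdV⟩ := hV.exists_mem_of_sSup_mem hD (hV.1 hz hzV)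
  exact ⟨d, hd, hV.sWayBelow hdV (hVx.trans interior_subset)⟩
end

section
/- Let L be the dcpo consisting of a bottom element 0 together with an infinite antichain {a_n : n ∈ ℕ} above 0. Then L is a strongly continuous domain but not a hypercontinuous domain. -/
open Set

variable {L : Type*}

/-!
Every directed subset of this flat dcpo contains its supremum, since there are no infinite
ascending chains. Hence each principal filter `↑x` is strongly Scott open, and `x ∈ int ↑x ⊆ U`
for every strongly Scott open `U ∋ x`.

A basic neighbourhood in the upper topology is the complement of `↓F` for a finite `F`, and it
contains all but finitely many `a m`. So `↑(a n) = {a n}` is nowhere a neighbourhood, the only `y`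
with `a 0 ∈ int ↑y` is `⊥`, and their supremum is `⊥ ≠ a 0`.
-/

open Topology

section StrongScott

variable [Preorder L] [SupSet L]

theorem isUpperSet_of_isOpen_strongScott {U : Set L} (hU : IsOpen[strongScott L] U) :
    IsUpperSet U := by
  induction hU with
  | basic V hV => exact hV.1
  | univ => exact isUpperSet_univ
  | inter V W _ _ hV hW => exact hV.inter hW
  | sUnion S _ hS => exact isUpperSet_sUnion hS

theorem stronglyScottOpen_Ici_of_sSup_mem (hsup : ∀ D : Set L, DirSet D → sSup D ∈ D) (x : L) :
    StronglyScottOpen (Ici x) :=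
  ⟨isUpperSet_Ici x, fun D hD _ hDx => ⟨sSup D, hsup D hD, hDx⟩⟩

theorem stronglyContinuousDomain_of_sSup_mem (hsup : ∀ D : Set L, DirSet D → sSup D ∈ D) :
    StronglyContinuousDomain L := by
  intro U hU x hx
  have hopen : IsOpen[strongScott L] (Ici x) :=
    .basic _ (stronglyScottOpen_Ici_of_sSup_mem hsup x)
  refine ⟨x, hx, ?_, fun y hxy => isUpperSet_of_isOpen_strongScott hU hxy hx⟩
  rw [@IsOpen.interior_eq L (strongScott L) _ hopen]
  exact self_mem_Ici

end StrongScott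

theorem DirSet.sSup_mem_of_wellFoundedGT [CompletePartialOrder L] [WellFoundedGT L] {D : Set L}
    (hD : DirSet D) : sSup D ∈ D := by
  obtain ⟨m, hm⟩ := exists_maximal_of_wellFoundedGT (· ∈ D) hD.1
  have hgreatest : IsGreatest D m := by
    refine ⟨hm.1, fun d hd => ?_⟩
    obtain ⟨z, hz, hdz, hmz⟩ := hD.2 d hd m hm.1
    exact hdz.trans (hm.2 hz hmz)
  rw [hD.2.isLUB_sSup.unique hgreatest.isLUB]
  exact hm.1

theorem stronglyContinuousDomain_of_wellFoundedGT [CompletePartialOrder L] [WellFoundedGT L] :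
    StronglyContinuousDomain L :=
  stronglyContinuousDomain_of_sSup_mem fun _ hD => hD.sSup_mem_of_wellFoundedGT

theorem upperTop_eq_upper (L : Type*) [Preorder L] : upperTop L = Topology.upper L := by
  simp only [upperTop, Topology.upper, eq_comm]

theorem exists_finite_compl_lowerClosure_subset_of_mem_interior_upperTop [Preorder L]
    {s : Set L} {x : L} (hx : x ∈ @interior L (upperTop L) s) :
    ∃ t : Set L, t.Finite ∧ (lowerClosure t : Set L)ᶜ ⊆ s := by
  let _ := upperTop L
  have : Topology.IsUpper L := ⟨upperTop_eq_upper L⟩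
  obtain ⟨_, ⟨t, ht, rfl⟩, -, hts⟩ :=
    Topology.IsUpper.isTopologicalBasis.mem_nhds_iff.1 (mem_interior_iff_mem_nhds.1 hx)
  exact ⟨t, ht, hts⟩

structure IsFlatNatDomain [PartialOrder L] (bot : L) (a : ℕ → L) : Prop where
  bot_le : ∀ x : L, bot ≤ x
  eq_bot_or_exists_eq : ∀ x : L, x = bot ∨ ∃ n : ℕ, x = a n
  ne_bot : ∀ n : ℕ, a n ≠ bot
  eq_of_apply_le_apply : ∀ m n : ℕ, a m ≤ a n → m = n

namespace IsFlatNatDomain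

variable [PartialOrder L] {bot : L} {a : ℕ → L}

theorem injective (h : IsFlatNatDomain bot a) : Function.Injective a :=
  fun m n hmn => h.eq_of_apply_le_apply m n hmn.le

theorem eq_of_apply_le (h : IsFlatNatDomain bot a) {n : ℕ} {x : L} (hx : a n ≤ x) : x = a n := by
  rcases h.eq_bot_or_exists_eq x with rfl | ⟨m, rfl⟩
  · exact absurd (le_antisymm hx (h.bot_le _)) (h.ne_bot n)
  · rw [h.eq_of_apply_le_apply n m hx]

theorem eq_bot_of_lt (h : IsFlatNatDomain bot a) {x y : L} (hxy : x < y) : x = bot := by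
  rcases h.eq_bot_or_exists_eq x with rfl | ⟨n, rfl⟩
  · rfl
  · exact absurd (h.eq_of_apply_le hxy.le) hxy.ne'

theorem wellFoundedGT (h : IsFlatNatDomain bot a) : WellFoundedGT L := by
  classical
  refine StrictMono.wellFoundedGT (f := fun x : L => decide (x ≠ bot)) fun x y hxy => ?_
  have hy : y ≠ bot := ((h.bot_le x).trans_lt hxy).ne'
  simp [h.eq_bot_of_lt hxy, hy]

theorem eq_bot_of_mem_interior_Ici (h : IsFlatNatDomain bot a) {x y : L}
    (hy : x ∈ @interior L (upperTop L) (Ici y)) : y = bot := by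
  obtain ⟨t, ht, hts⟩ := exists_finite_compl_lowerClosure_subset_of_mem_interior_upperTop hy
  rcases h.eq_bot_or_exists_eq y with rfl | ⟨n, rfl⟩
  · rfl
  have hcofinite : {n}ᶜ ⊆ a ⁻¹' t := by
    intro m hm
    have hmt : a m ∈ lowerClosure t :=
      by_contra fun hmt => hm (h.eq_of_apply_le_apply n m (hts hmt)).symm
    obtain ⟨z, hz, hmz⟩ := hmt
    exact (h.eq_of_apply_le hmz ▸ hz : a m ∈ t)
  exact absurd ((ht.preimage h.injective.injOn).subset hcofinite)
    (finite_singleton n).infinite_compl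

theorem not_hypercontinuousDomain (h : IsFlatNatDomain bot a) : ¬ HypercontinuousDomain L := by
  intro H
  have hbot_ub : bot ∈ upperBounds {y | a 0 ∈ @interior L (upperTop L) (Ici y)} :=
    fun _ hy => (h.eq_bot_of_mem_interior_Ici hy).le
  exact h.ne_bot 0 (le_antisymm ((H (a 0)).2.2 hbot_ub) (h.bot_le _))

end IsFlatNatDomain

theorem antichain_with_bot_stronglyContinuous_not_hypercontinuous
    [CompletePartialOrder L] (bot : L) (a : ℕ → L)
    (hbot : ∀ x : L, bot ≤ x)
    (hcover : ∀ x : L, x = bot ∨ ∃ n : ℕ, x = a n)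
    (hne : ∀ n : ℕ, a n ≠ bot)
    (hanti : ∀ m n : ℕ, a m ≤ a n → m = n) :
    StronglyContinuousDomain L ∧ ¬ HypercontinuousDomain L := by
  have h : IsFlatNatDomain bot a := ⟨hbot, hcover, hne, hanti⟩
  have := h.wellFoundedGT
  exact ⟨stronglyContinuousDomain_of_wellFoundedGT, h.not_hypercontinuousDomain⟩
end
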